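/- arXiv:1910.04653 — 2 statements merged into one kernel-verified Lean document; each statement's English description precedes it below -/
import Mathlib

section
/- (Multivariate Hensel's lemma over ℤ_p.) Let m ≥ 1, let f = (f_1, …, f_m) be an m-tuple of polynomials in ℤ_p[x_1, …, x_m], and for x ∈ ℤ_p^m let J_f(x) denote the m×m Jacobian matrix whose (i,k) entry is (∂f_i/∂x_k)(x). Suppose a ∈ ℤ_p^m satisfies ‖f_i(a)‖_p < ‖det J_f(a)‖_p^2 for all i = 1, …, m (equivalently, min_i ord_p(f_i(a)) > 2·ord_p(det J_f(a))). Then there exists a unique α ∈ ℤ_p^m such that f_i(α) = 0 for all i and ‖α_i − a_i‖_p < ‖det J_f(a)‖_p for all i. Moreover, this α satisfies ‖α_i − a_i‖_p · ‖det J_f(a)‖_p ≤ max_k ‖f_k(a)‖_p for all i. -/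
/-!
Write `F x = (f_i(x))_i`, `J = J_f(a)`, `d = det J`, `δ = ‖d‖` and `t = ‖F a‖ < δ²`. Taylor
expansion with integral coefficients bounds `F x - F y - J (x - y)` by
`max ‖x - y‖ ‖y - a‖ * ‖x - y‖`, and `adj J * J = d` with `‖adj J‖ ≤ 1` gives `δ ‖v‖ ≤ ‖J v‖`.
Hence the Newton map `x ↦ x - J⁻¹ F x` with the Jacobian frozen at `a` is integral on the closed
ball of radius `t / δ` around `a` (there `d` divides `adj J (F x)`), maps it to itself and
contracts it with ratio `t / δ²`; its fixed point is the root. The same two estimates give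
`δ ‖x - y‖ ≤ ‖F x - F y‖` for `x`, `y` within `δ` of `a`, which yields uniqueness and, with
`y = a`, the bound `δ ‖α - a‖ ≤ t`.
-/

/-- The determinant of the Jacobian matrix of an `m`-tuple of polynomials
`f = (f_1, …, f_m)` in `ℤ_p[x_1, …, x_m]`, evaluated at the point `x ∈ ℤ_p^m`. -/
noncomputable def jacobianDet {p : ℕ} [Fact p.Prime] {m : ℕ}
    (f : Fin m → MvPolynomial (Fin m) ℤ_[p]) (x : Fin m → ℤ_[p]) : ℤ_[p] :=
  (Matrix.of fun i k => MvPolynomial.eval x (MvPolynomial.pderiv k (f i))).det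

open MvPolynomial Matrix Metric Set Function

theorem IsUltrametricDist.norm_sub_le_max_norm_sub {E : Type*} [SeminormedAddCommGroup E]
    [IsUltrametricDist E] (x y z : E) : ‖x - z‖ ≤ max ‖x - y‖ ‖y - z‖ := by
  simpa only [dist_eq_norm] using dist_triangle_max x y z

namespace PadicInt

variable {p : ℕ} [Fact p.Prime]

theorem dvd_of_norm_le {z d : ℤ_[p]} (h : ‖z‖ ≤ ‖d‖) : d ∣ z := by
  rcases eq_or_ne d 0 with rfl | hd
  · rw [norm_zero, norm_le_zero_iff] at h
    simp [h]
  have hd' : (d : ℚ_[p]) ≠ 0 := coe_ne_zero.2 hd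
  have hquot : ‖(z : ℚ_[p]) / d‖ ≤ 1 := by
    rw [norm_div, ← norm_def, ← norm_def]
    exact div_le_one_of_le₀ h (norm_nonneg _)
  refine ⟨⟨(z : ℚ_[p]) / d, hquot⟩, Subtype.ext ?_⟩
  exact (mul_div_cancel₀ _ hd').symm

theorem norm_le_of_mem_span {c : ℝ} (hc : 0 ≤ c) {S : Set ℤ_[p]} (hS : ∀ s ∈ S, ‖s‖ ≤ c)
    {z : ℤ_[p]} (hz : z ∈ Ideal.span S) : ‖z‖ ≤ c := by
  induction hz using Submodule.span_induction with
  | mem s hs => exact hS s hs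
  | zero => simpa using hc
  | add y z _ _ hy hz => exact (IsUltrametricDist.norm_add_le_max y z).trans (max_le hy hz)
  | smul r y _ hy =>
    rw [smul_eq_mul, norm_mul]
    exact (mul_le_of_le_one_left (norm_nonneg y) (norm_le_one r)).trans hy

variable {ι κ : Type*} [Fintype κ]

theorem norm_le_of_mem_span_range (h : κ → ℤ_[p]) {z : ℤ_[p]}
    (hz : z ∈ Ideal.span (Set.range h)) : ‖z‖ ≤ ‖h‖ :=
  norm_le_of_mem_span (norm_nonneg h) (by rintro _ ⟨k, rfl⟩; exact norm_le_pi_norm h k) hz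

theorem norm_le_of_mem_span_range_sq (h : κ → ℤ_[p]) {z : ℤ_[p]}
    (hz : z ∈ Ideal.span (Set.range h) ^ 2) : ‖z‖ ≤ ‖h‖ ^ 2 := by
  rw [sq, Ideal.span_mul_span'] at hz
  refine norm_le_of_mem_span (by positivity) ?_ hz
  rintro _ ⟨_, ⟨i, rfl⟩, _, ⟨j, rfl⟩, rfl⟩
  rw [norm_mul, sq]
  exact mul_le_mul (norm_le_pi_norm h i) (norm_le_pi_norm h j) (norm_nonneg _) (norm_nonneg _)

theorem norm_mulVec_le [Fintype ι] (M : Matrix ι κ ℤ_[p]) (v : κ → ℤ_[p]) : ‖M *ᵥ v‖ ≤ ‖v‖ := by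
  refine (pi_norm_le_iff_of_nonneg (norm_nonneg v)).2 fun i => ?_
  refine IsUltrametricDist.norm_sum_le_of_forall_le_of_nonneg (norm_nonneg v) fun k _ => ?_
  rw [norm_mul]
  exact (mul_le_of_le_one_left (norm_nonneg _) (norm_le_one _)).trans (norm_le_pi_norm v k)

theorem norm_det_mul_norm_le_norm_mulVec [DecidableEq κ] (M : Matrix κ κ ℤ_[p]) (v : κ → ℤ_[p]) :
    ‖M.det‖ * ‖v‖ ≤ ‖M *ᵥ v‖ :=
  calc ‖M.det‖ * ‖v‖ = ‖M.adjugate *ᵥ (M *ᵥ v)‖ := by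
        rw [mulVec_mulVec, adjugate_mul, smul_mulVec, one_mulVec, norm_smul]
    _ ≤ ‖M *ᵥ v‖ := norm_mulVec_le _ _

end PadicInt

namespace MvPolynomial

section

variable {R ι σ : Type*} [CommRing R]

theorem eval_add_sub_eval_mem_span (g : MvPolynomial σ R) (x h : σ → R) :
    eval (x + h) g - eval x g ∈ Ideal.span (Set.range h) := by
  induction g using MvPolynomial.induction_on with
  | C c => simp
  | add q r hq hr => simpa [add_sub_add_comm] using add_mem hq hr
  | mul_X q i hq =>
    have e : eval (x + h) (q * X i) - eval x (q * X i)
        = x i * (eval (x + h) q - eval x q) + eval (x + h) q * h i := by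
      simp only [map_mul, eval_X, Pi.add_apply]; ring
    rw [e]
    exact add_mem (Ideal.mul_mem_left _ _ hq) (Ideal.mul_mem_left _ _ (Ideal.subset_span ⟨i, rfl⟩))

theorem eval_add_sub_eval_sub_sum_pderiv_mem_span_sq [Fintype σ] [DecidableEq σ]
    (g : MvPolynomial σ R) (x h : σ → R) :
    eval (x + h) g - eval x g - ∑ k, eval x (pderiv k g) * h k ∈ Ideal.span (Set.range h) ^ 2 := by
  induction g using MvPolynomial.induction_on with
  | C c => simp
  | add q r hq hr =>
    convert add_mem hq hr using 1
    simp only [map_add, add_mul, Finset.sum_add_distrib]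
    ring
  | mul_X q i hq =>
    have hsum : ∑ k, eval x (pderiv k (q * X i)) * h k
        = x i * ∑ k, eval x (pderiv k q) * h k + eval x q * h i := by
      simp [pderiv_X, Pi.single_apply, add_mul, Finset.sum_add_distrib, Finset.mul_sum, mul_assoc,
        apply_ite (eval x), add_comm]
    have e : eval (x + h) (q * X i) - eval x (q * X i) - ∑ k, eval x (pderiv k (q * X i)) * h k
        = x i * (eval (x + h) q - eval x q - ∑ k, eval x (pderiv k q) * h k)
          + (eval (x + h) q - eval x q) * h i := by
      rw [hsum]; simp only [map_mul, eval_X, Pi.add_apply]; ring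
    rw [e, sq]
    exact add_mem (Ideal.mul_mem_left _ _ (by rwa [← sq]))
      (Ideal.mul_mem_mul (eval_add_sub_eval_mem_span q x h) (Ideal.subset_span ⟨i, rfl⟩))

noncomputable def polyMap (f : ι → MvPolynomial σ R) (x : σ → R) : ι → R := fun i => eval x (f i)

noncomputable def jacobian [DecidableEq σ] (f : ι → MvPolynomial σ R) (x : σ → R) : Matrix ι σ R :=
  Matrix.of fun i k => eval x (pderiv k (f i))

end

section

variable {p : ℕ} [Fact p.Prime] {ι σ : Type*} [Fintype σ]

theorem norm_eval_sub_eval_le (g : MvPolynomial σ ℤ_[p]) (x y : σ → ℤ_[p]) :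
    ‖eval x g - eval y g‖ ≤ ‖x - y‖ := by
  simpa using PadicInt.norm_le_of_mem_span_range _ (eval_add_sub_eval_mem_span g y (x - y))

theorem norm_polyMap_sub_le [Fintype ι] (f : ι → MvPolynomial σ ℤ_[p]) (x y : σ → ℤ_[p]) :
    ‖polyMap f x - polyMap f y‖ ≤ ‖x - y‖ :=
  (pi_norm_le_iff_of_nonneg (norm_nonneg _)).2 fun i => norm_eval_sub_eval_le (f i) x y

variable [DecidableEq σ]

theorem norm_eval_add_sub_eval_sub_sum_pderiv_le (g : MvPolynomial σ ℤ_[p]) (x h : σ → ℤ_[p]) :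
    ‖eval (x + h) g - eval x g - ∑ k, eval x (pderiv k g) * h k‖ ≤ ‖h‖ ^ 2 :=
  PadicInt.norm_le_of_mem_span_range_sq h (eval_add_sub_eval_sub_sum_pderiv_mem_span_sq g x h)

theorem norm_polyMap_sub_sub_jacobian_mulVec_le [Fintype ι] (f : ι → MvPolynomial σ ℤ_[p])
    (a x y : σ → ℤ_[p]) :
    ‖polyMap f x - polyMap f y - jacobian f a *ᵥ (x - y)‖ ≤ max ‖x - y‖ ‖y - a‖ * ‖x - y‖ := by
  obtain ⟨h, rfl⟩ : ∃ h, x = y + h := ⟨x - y, (add_sub_cancel y x).symm⟩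
  rw [add_sub_cancel_left]
  refine (pi_norm_le_iff_of_nonneg (by positivity)).2 fun i => ?_
  have hsplit : (polyMap f (y + h) - polyMap f y - jacobian f a *ᵥ h) i
      = (eval (y + h) (f i) - eval y (f i) - ∑ k, eval y (pderiv k (f i)) * h k)
        + ∑ k, (eval y (pderiv k (f i)) - eval a (pderiv k (f i))) * h k := by
    simp only [polyMap, jacobian, Pi.sub_apply, mulVec, dotProduct, Matrix.of_apply, sub_mul,
      Finset.sum_sub_distrib]
    ring
  rw [hsplit]
  refine (IsUltrametricDist.norm_add_le_max _ _).trans (max_le ?_ ?_)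
  · refine (norm_eval_add_sub_eval_sub_sum_pderiv_le _ y h).trans ?_
    rw [sq]
    gcongr
    exact le_max_left _ _
  · refine IsUltrametricDist.norm_sum_le_of_forall_le_of_nonneg (by positivity) fun k _ => ?_
    rw [norm_mul]
    gcongr
    · exact (norm_eval_sub_eval_le _ y a).trans (le_max_right _ _)
    · exact norm_le_pi_norm h k

theorem norm_det_jacobian_mul_norm_sub_le (f : σ → MvPolynomial σ ℤ_[p]) {a x y : σ → ℤ_[p]}
    (hxy : ‖x - y‖ < ‖(jacobian f a).det‖) (hya : ‖y - a‖ < ‖(jacobian f a).det‖) :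
    ‖(jacobian f a).det‖ * ‖x - y‖ ≤ ‖polyMap f x - polyMap f y‖ := by
  set J := jacobian f a
  by_contra! hlt
  have hpos : 0 < ‖x - y‖ := pos_of_mul_pos_right ((norm_nonneg _).trans_lt hlt) (norm_nonneg _)
  have herr : ‖polyMap f x - polyMap f y - J *ᵥ (x - y)‖ < ‖J.det‖ * ‖x - y‖ :=
    (norm_polyMap_sub_sub_jacobian_mulVec_le f a x y).trans_lt
      (mul_lt_mul_of_pos_right (max_lt hxy hya) hpos)
  have hJ : ‖J *ᵥ (x - y)‖ < ‖J.det‖ * ‖x - y‖ := by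
    rw [← sub_sub_cancel (polyMap f x - polyMap f y) (J *ᵥ (x - y)), sub_eq_add_neg]
    exact (IsUltrametricDist.norm_add_le_max _ _).trans_lt (max_lt hlt (by rwa [norm_neg]))
  exact (PadicInt.norm_det_mul_norm_le_norm_mulVec J (x - y)).not_gt hJ

end

section

variable {p : ℕ} [Fact p.Prime] {σ : Type*} [Fintype σ] [DecidableEq σ]
  (f : σ → MvPolynomial σ ℤ_[p]) (a : σ → ℤ_[p])

/-- The Newton step `x ↦ x - J(a)⁻¹ F(x)` with the Jacobian frozen at `a`, written without
division as the `y` with `det J(a) • (x - y) = adj J(a) F(x)` (junk when there is none). -/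
noncomputable def newtonMap (x : σ → ℤ_[p]) : σ → ℤ_[p] :=
  Classical.epsilon fun y => (jacobian f a).det • (x - y) = (jacobian f a).adjugate *ᵥ polyMap f x

theorem det_smul_sub_newtonMap {x : σ → ℤ_[p]}
    (hx : ‖(jacobian f a).adjugate *ᵥ polyMap f x‖ ≤ ‖(jacobian f a).det‖) :
    (jacobian f a).det • (x - newtonMap f a x) = (jacobian f a).adjugate *ᵥ polyMap f x := by
  choose c hc using fun i => PadicInt.dvd_of_norm_le ((norm_le_pi_norm _ i).trans hx)
  refine Classical.epsilon_spec (p := fun y => (jacobian f a).det • (x - y) = _) ⟨x - c, ?_⟩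
  ext i
  simp [hc i]

variable {f a}

theorem norm_det_jacobian_pos (ha : ‖polyMap f a‖ < ‖(jacobian f a).det‖ ^ 2) :
    0 < ‖(jacobian f a).det‖ :=
  (norm_nonneg _).lt_of_ne' fun h => by simp [h, (norm_nonneg _).not_gt] at ha

theorem norm_polyMap_div_lt_norm_det_jacobian (ha : ‖polyMap f a‖ < ‖(jacobian f a).det‖ ^ 2) :
    ‖polyMap f a‖ / ‖(jacobian f a).det‖ < ‖(jacobian f a).det‖ := by
  rwa [div_lt_iff₀ (norm_det_jacobian_pos ha), ← sq]

theorem norm_adjugate_mulVec_polyMap_le (ha : ‖polyMap f a‖ < ‖(jacobian f a).det‖ ^ 2)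
    {x : σ → ℤ_[p]} (hx : ‖x - a‖ ≤ ‖polyMap f a‖ / ‖(jacobian f a).det‖) :
    ‖(jacobian f a).adjugate *ᵥ polyMap f x‖ ≤ ‖(jacobian f a).det‖ := by
  have ht : ‖polyMap f a‖ ≤ ‖(jacobian f a).det‖ :=
    ha.le.trans (pow_le_of_le_one (norm_nonneg _) (PadicInt.norm_le_one _) two_ne_zero)
  calc _ ≤ ‖polyMap f x‖ := PadicInt.norm_mulVec_le _ _
    _ = ‖(polyMap f x - polyMap f a) + polyMap f a‖ := by rw [sub_add_cancel]
    _ ≤ max ‖x - a‖ ‖polyMap f a‖ :=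
      (IsUltrametricDist.norm_add_le_max _ _).trans (max_le_max_right _ (norm_polyMap_sub_le f x a))
    _ ≤ _ := max_le (hx.trans (norm_polyMap_div_lt_norm_det_jacobian ha).le) ht

theorem norm_det_mul_norm_newtonMap_sub_le (ha : ‖polyMap f a‖ < ‖(jacobian f a).det‖ ^ 2)
    {x y : σ → ℤ_[p]} (hx : ‖x - a‖ ≤ ‖polyMap f a‖ / ‖(jacobian f a).det‖)
    (hy : ‖y - a‖ ≤ ‖polyMap f a‖ / ‖(jacobian f a).det‖) :
    ‖(jacobian f a).det‖ * ‖newtonMap f a x - newtonMap f a y‖ ≤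
      ‖polyMap f a‖ / ‖(jacobian f a).det‖ * ‖x - y‖ := by
  have hNx := det_smul_sub_newtonMap f a (norm_adjugate_mulVec_polyMap_le ha hx)
  have hNy := det_smul_sub_newtonMap f a (norm_adjugate_mulVec_polyMap_le ha hy)
  set J := jacobian f a
  have hJ : J.det • (x - y) = J.adjugate *ᵥ (J *ᵥ (x - y)) := by
    rw [mulVec_mulVec, adjugate_mul, smul_mulVec, one_mulVec]
  have hN : J.det • (newtonMap f a x - newtonMap f a y)
      = -(J.adjugate *ᵥ (polyMap f x - polyMap f y - J *ᵥ (x - y))) := by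
    calc _ = J.det • (x - y) - J.det • (x - newtonMap f a x) + J.det • (y - newtonMap f a y) := by
          simp only [smul_sub]; abel
      _ = _ := by
          rw [hJ, hNx, hNy]
          simp only [mulVec_sub]
          abel
  have hxy : ‖x - y‖ ≤ ‖polyMap f a‖ / ‖J.det‖ :=
    (IsUltrametricDist.norm_sub_le_max_norm_sub x a y).trans (max_le hx (norm_sub_rev a y ▸ hy))
  calc ‖J.det‖ * ‖newtonMap f a x - newtonMap f a y‖
      = ‖J.det • (newtonMap f a x - newtonMap f a y)‖ := (norm_smul _ _).symm
    _ ≤ ‖polyMap f x - polyMap f y - J *ᵥ (x - y)‖ := by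
      rw [hN, norm_neg]; exact PadicInt.norm_mulVec_le _ _
    _ ≤ max ‖x - y‖ ‖y - a‖ * ‖x - y‖ := norm_polyMap_sub_sub_jacobian_mulVec_le f a x y
    _ ≤ _ := by gcongr; exact max_le hxy hy

theorem mapsTo_newtonMap (ha : ‖polyMap f a‖ < ‖(jacobian f a).det‖ ^ 2) :
    MapsTo (newtonMap f a) (closedBall a (‖polyMap f a‖ / ‖(jacobian f a).det‖))
      (closedBall a (‖polyMap f a‖ / ‖(jacobian f a).det‖)) := by
  intro x hx
  have hδ := norm_det_jacobian_pos ha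
  have hρδ := norm_polyMap_div_lt_norm_det_jacobian ha
  set ρ := ‖polyMap f a‖ / ‖(jacobian f a).det‖
  have hρ : 0 ≤ ρ := by positivity
  have ha' : ‖a - a‖ ≤ ρ := by simpa using hρ
  rw [mem_closedBall_iff_norm] at hx ⊢
  have hstep : ‖newtonMap f a a - a‖ ≤ ρ := by
    rw [le_div_iff₀ hδ, mul_comm, norm_sub_rev, ← norm_smul,
      det_smul_sub_newtonMap f a (norm_adjugate_mulVec_polyMap_le ha ha')]
    exact PadicInt.norm_mulVec_le _ _
  have hmove : ‖newtonMap f a x - newtonMap f a a‖ ≤ ρ := by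
    refine le_of_mul_le_mul_left ?_ hδ
    calc _ ≤ ρ * ‖x - a‖ := norm_det_mul_norm_newtonMap_sub_le ha hx ha'
      _ ≤ ρ * ‖(jacobian f a).det‖ := mul_le_mul_of_nonneg_left (hx.trans hρδ.le) hρ
      _ = _ := mul_comm _ _
  exact (IsUltrametricDist.norm_sub_le_max_norm_sub _ (newtonMap f a a) a).trans
    (max_le hmove hstep)

theorem contractingWith_newtonMap (ha : ‖polyMap f a‖ < ‖(jacobian f a).det‖ ^ 2) :
    ContractingWith (‖polyMap f a‖ / ‖(jacobian f a).det‖ ^ 2).toNNReal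
      ((mapsTo_newtonMap ha).restrict _ _ _) := by
  have hδ := norm_det_jacobian_pos ha
  constructor
  · rwa [Real.toNNReal_lt_one, div_lt_one (by positivity)]
  · refine LipschitzWith.of_dist_le_mul fun x y => ?_
    rw [Real.coe_toNNReal _ (by positivity), Subtype.dist_eq, Subtype.dist_eq,
      MapsTo.val_restrict_apply, MapsTo.val_restrict_apply, dist_eq_norm, dist_eq_norm, sq,
      ← div_div, div_mul_eq_mul_div, le_div_iff₀ hδ, mul_comm]
    exact norm_det_mul_norm_newtonMap_sub_le ha (mem_closedBall_iff_norm.1 x.2)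
      (mem_closedBall_iff_norm.1 y.2)

theorem polyMap_eq_zero_of_isFixedPt (ha : ‖polyMap f a‖ < ‖(jacobian f a).det‖ ^ 2)
    {x : σ → ℤ_[p]} (hx : ‖x - a‖ ≤ ‖polyMap f a‖ / ‖(jacobian f a).det‖)
    (hfix : IsFixedPt (newtonMap f a) x) : polyMap f x = 0 := by
  have hadj : (jacobian f a).adjugate *ᵥ polyMap f x = 0 := by
    rw [← det_smul_sub_newtonMap f a (norm_adjugate_mulVec_polyMap_le ha hx), hfix.eq, sub_self,
      smul_zero]
  have hdet : (jacobian f a).det • polyMap f x = 0 := by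
    rw [← one_mulVec (polyMap f x), ← smul_mulVec, ← mul_adjugate, ← mulVec_mulVec, hadj,
      mulVec_zero]
  exact (smul_eq_zero.1 hdet).resolve_left (norm_pos_iff.1 (norm_det_jacobian_pos ha))

theorem exists_polyMap_eq_zero (ha : ‖polyMap f a‖ < ‖(jacobian f a).det‖ ^ 2) :
    ∃ α, polyMap f α = 0 ∧ ‖α - a‖ < ‖(jacobian f a).det‖ := by
  have hρ : 0 ≤ ‖polyMap f a‖ / ‖(jacobian f a).det‖ := by positivity
  obtain ⟨α, hα, hfix, -⟩ := ContractingWith.exists_fixedPoint' isClosed_closedBall.isComplete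
    (mapsTo_newtonMap ha) (contractingWith_newtonMap ha) (mem_closedBall_self hρ) (edist_ne_top _ _)
  rw [mem_closedBall_iff_norm] at hα
  exact ⟨α, polyMap_eq_zero_of_isFixedPt ha hα hfix,
    hα.trans_lt (norm_polyMap_div_lt_norm_det_jacobian ha)⟩

theorem eq_of_polyMap_eq {x y : σ → ℤ_[p]} (hxa : ‖x - a‖ < ‖(jacobian f a).det‖)
    (hya : ‖y - a‖ < ‖(jacobian f a).det‖) (hxy : polyMap f x = polyMap f y) : x = y := by
  have hδ : 0 < ‖(jacobian f a).det‖ := (norm_nonneg _).trans_lt hxa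
  have hdist : ‖x - y‖ < ‖(jacobian f a).det‖ :=
    (IsUltrametricDist.norm_sub_le_max_norm_sub x a y).trans_lt
      (max_lt hxa (norm_sub_rev a y ▸ hya))
  have h := norm_det_jacobian_mul_norm_sub_le f hdist hya
  rw [hxy, sub_self, norm_zero] at h
  exact sub_eq_zero.1 (norm_le_zero_iff.1 (nonpos_of_mul_nonpos_right h hδ))

theorem norm_det_jacobian_mul_norm_sub_le_of_polyMap_eq_zero {x : σ → ℤ_[p]}
    (hx : polyMap f x = 0) (hxa : ‖x - a‖ < ‖(jacobian f a).det‖) :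
    ‖(jacobian f a).det‖ * ‖x - a‖ ≤ ‖polyMap f a‖ := by
  have h := norm_det_jacobian_mul_norm_sub_le f hxa (by simpa using (norm_nonneg _).trans_lt hxa)
  rwa [hx, zero_sub, norm_neg] at h

end

end MvPolynomial

theorem jacobianDet_eq_det_jacobian {p : ℕ} [Fact p.Prime] {m : ℕ}
    (f : Fin m → MvPolynomial (Fin m) ℤ_[p]) (x : Fin m → ℤ_[p]) :
    jacobianDet f x = (jacobian f x).det :=
  rfl

/-- **Multivariate Hensel's lemma over `ℤ_p`.** Let `f = (f_1, …, f_m)` be an `m`-tuple of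
polynomials in `ℤ_p[x_1, …, x_m]` (`m ≥ 1`) and suppose `a ∈ ℤ_p^m` satisfies
`‖f_i(a)‖ < ‖det J_f(a)‖²` for all `i`. Then there exists a unique `α ∈ ℤ_p^m` with
`f(α) = 0` and `‖α_i − a_i‖ < ‖det J_f(a)‖` for all `i`; moreover this `α` satisfies
`‖α_i − a_i‖ · ‖det J_f(a)‖ ≤ max_k ‖f_k(a)‖` for all `i`. -/
theorem multivariate_hensel (p : ℕ) [Fact p.Prime] (m : ℕ) (hm : 1 ≤ m)
    (f : Fin m → MvPolynomial (Fin m) ℤ_[p]) (a : Fin m → ℤ_[p])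
    (ha : ∀ i, ‖MvPolynomial.eval a (f i)‖ < ‖jacobianDet f a‖ ^ 2) :
    (∃! α : Fin m → ℤ_[p],
        (∀ i, MvPolynomial.eval α (f i) = 0) ∧
          ∀ i, ‖α i - a i‖ < ‖jacobianDet f a‖) ∧
      ∀ α : Fin m → ℤ_[p],
        ((∀ i, MvPolynomial.eval α (f i) = 0) ∧
            ∀ i, ‖α i - a i‖ < ‖jacobianDet f a‖) →
          ∀ i, ‖α i - a i‖ * ‖jacobianDet f a‖ ≤
            Finset.univ.sup' (Finset.univ_nonempty_iff.mpr ⟨⟨0, hm⟩⟩)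
              (fun k => ‖MvPolynomial.eval a (f k)‖) := by
  simp only [jacobianDet_eq_det_jacobian] at ha ⊢
  have hF : ‖polyMap f a‖ < ‖(jacobian f a).det‖ ^ 2 :=
    (pi_norm_lt_iff ((norm_nonneg _).trans_lt (ha ⟨0, hm⟩))).2 ha
  have hroot : ∀ α, (∀ i, eval α (f i) = 0) ↔ polyMap f α = 0 := fun α => funext_iff.symm
  have hnear : ∀ α, (∀ i, ‖α i - a i‖ < ‖(jacobian f a).det‖) ↔ ‖α - a‖ < ‖(jacobian f a).det‖ :=
    fun α => (pi_norm_lt_iff (norm_det_jacobian_pos hF)).symm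
  simp only [hroot, hnear]
  obtain ⟨α, hα, hαa⟩ := exists_polyMap_eq_zero hF
  refine ⟨⟨α, ⟨hα, hαa⟩, fun β hβ => eq_of_polyMap_eq hβ.2 hαa (hβ.1.trans hα.symm)⟩,
    fun β hβ i => ?_⟩
  have hsup : ‖polyMap f a‖ ≤ Finset.univ.sup' (Finset.univ_nonempty_iff.mpr ⟨⟨0, hm⟩⟩)
      (fun k => ‖eval a (f k)‖) :=
    have : Nonempty (Fin m) := ⟨⟨0, hm⟩⟩
    (pi_norm_le_iff_of_nonempty _).2 fun k =>
      Finset.le_sup' (fun k => ‖eval a (f k)‖) (Finset.mem_univ k)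
  calc ‖β i - a i‖ * ‖(jacobian f a).det‖ ≤ ‖(jacobian f a).det‖ * ‖β - a‖ := by
        rw [mul_comm]; gcongr; exact norm_le_pi_norm (β - a) i
    _ ≤ ‖polyMap f a‖ := norm_det_jacobian_mul_norm_sub_le_of_polyMap_eq_zero hβ.1 hβ.2
    _ ≤ _ := hsup
end

section
/- (Newton iteration convergence for the multivariate Hensel's lemma.) Let m ≥ 1, let f = (f_1, …, f_m) ∈ ℤ_p[x_1, …, x_m]^m, and let a ∈ ℤ_p^m satisfy ord_p(f(a)) > 2·ord_p(det J_f(a)), where J_f denotes the Jacobian matrix of f. Define the Newton sequence by a_1 = a and a_{N+1} = a_N − J_f(a_N)^{-1} f(a_N) (viewing f(a_N) as a column vector). Then: (1) the sequence is well defined, i.e. for every N one has a_N ∈ ℤ_p^m and ‖det J_f(a_N)‖_p = ‖det J_f(a)‖_p ≠ 0; and (2) if α ∈ ℤ_p^m denotes the unique root of f with ord_p(α − a) > ord_p(det J_f(a)), then for every N ≥ 1 one has ord_p(α − a_N) ≥ ord_p(det J_f(a)) + 2^{N−1}·(ord_p(f(a)) − 2·ord_p(det J_f(a))); in particular the sequence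 (a_N) converges to α. -/
/-- The Jacobian matrix of an `m`-tuple of polynomials `f = (f_1, …, f_m)` in
`ℤ_p[x_1, …, x_m]`, evaluated at a point `x ∈ ℚ_p^m`. -/
noncomputable def jacobianQ {p : ℕ} [Fact p.Prime] {m : ℕ}
    (f : Fin m → MvPolynomial (Fin m) ℤ_[p]) (x : Fin m → ℚ_[p]) :
    Matrix (Fin m) (Fin m) ℚ_[p] :=
  Matrix.of fun i k => MvPolynomial.aeval x (MvPolynomial.pderiv k (f i))

open MvPolynomial IsUltrametricDist Matrix Filter Topology

namespace PadicNewton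

section UltrametricGroup

variable {E : Type*} [SeminormedAddCommGroup E] [IsUltrametricDist E]

theorem norm_sub_le_max (x y : E) : ‖x - y‖ ≤ max ‖x‖ ‖y‖ := by
  simpa [sub_eq_add_neg] using norm_add_le_max x (-y)

theorem norm_le_of_norm_sub_le {x y : E} {r : ℝ} (hy : ‖y‖ ≤ r) (hxy : ‖x - y‖ ≤ r) :
    ‖x‖ ≤ r := by
  simpa using (norm_add_le_max y (x - y)).trans (max_le hy hxy)

theorem norm_eq_of_norm_sub_lt {x y : E} (h : ‖x - y‖ < ‖y‖) : ‖x‖ = ‖y‖ := by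
  simpa [max_eq_left h.le] using norm_add_eq_max_of_norm_ne_norm h.ne'

end UltrametricGroup

section UltrametricRing

variable {R : Type*} [NormedRing R] [IsUltrametricDist R] {ι : Type*} [Fintype ι]

theorem norm_dotProduct_le {u : ι → R} (hu : ∀ j, ‖u j‖ ≤ 1) (v : ι → R) :
    ‖u ⬝ᵥ v‖ ≤ ‖v‖ :=
  norm_sum_le_of_forall_le_of_nonneg (norm_nonneg v) fun j _ =>
    (norm_mul_le _ _).trans <|
      (mul_le_of_le_one_left (norm_nonneg _) (hu j)).trans (norm_le_pi_norm v j)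

theorem norm_mulVec_le {κ : Type*} [Fintype κ] {A : Matrix κ ι R} (hA : ∀ i j, ‖A i j‖ ≤ 1)
    (v : ι → R) : ‖A *ᵥ v‖ ≤ ‖v‖ :=
  (pi_norm_le_iff_of_nonneg (norm_nonneg v)).2 fun i => norm_dotProduct_le (hA i) v

end UltrametricRing

theorem seq_succ_eq_iterate {α : Type*} {g : α → α} {s : ℕ → α} {x : α} (h₁ : s 1 = x)
    (hs : ∀ N, 1 ≤ N → s (N + 1) = g (s N)) (n : ℕ) : s (n + 1) = g^[n] x := by
  induction n with
  | zero => exact h₁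
  | succ n ih => rw [hs (n + 1) n.succ_pos, ih, Function.iterate_succ_apply']

variable {p : ℕ} [Fact p.Prime]

section IntegralMatrix

variable {n : Type*} [Fintype n] [DecidableEq n] {M : Matrix n n ℚ_[p]}

theorem exists_mapMatrix_coe_eq (hM : ∀ i j, ‖M i j‖ ≤ 1) :
    ∃ M' : Matrix n n ℤ_[p], PadicInt.Coe.ringHom.mapMatrix M' = M :=
  ⟨fun i j => ⟨M i j, hM i j⟩, rfl⟩

theorem norm_det_le_one (hM : ∀ i j, ‖M i j‖ ≤ 1) : ‖M.det‖ ≤ 1 := by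
  obtain ⟨M', rfl⟩ := exists_mapMatrix_coe_eq hM
  rw [← RingHom.map_det]
  exact M'.det.norm_le_one

theorem norm_adjugate_apply_le_one (hM : ∀ i j, ‖M i j‖ ≤ 1) (i j : n) :
    ‖M.adjugate i j‖ ≤ 1 := by
  obtain ⟨M', rfl⟩ := exists_mapMatrix_coe_eq hM
  rw [← RingHom.map_adjugate]
  exact (M'.adjugate i j).norm_le_one

-- No invertibility hypothesis: if `M.det = 0` then `M⁻¹ = 0` and both sides vanish.
theorem norm_inv_mulVec_le (hM : ∀ i j, ‖M i j‖ ≤ 1) (v : n → ℚ_[p]) :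
    ‖M⁻¹ *ᵥ v‖ ≤ ‖v‖ / ‖M.det‖ := by
  rw [inv_def, Ring.inverse_eq_inv', smul_mulVec, norm_smul, norm_inv, inv_mul_eq_div]
  exact div_le_div_of_nonneg_right (norm_mulVec_le (norm_adjugate_apply_le_one hM) v)
    (norm_nonneg _)

end IntegralMatrix

section Polynomial

variable {σ : Type*}

theorem aeval_coe_padicInt (g : MvPolynomial σ ℤ_[p]) (x : σ → ℤ_[p]) :
    aeval (fun i => (x i : ℚ_[p])) g = (eval x g : ℚ_[p]) :=
  aeval_algebraMap_apply ℚ_[p] x g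

noncomputable def gradientAt (g : MvPolynomial σ ℤ_[p]) (x : σ → ℚ_[p]) : σ → ℚ_[p] :=
  fun k => aeval x (pderiv k g)

theorem gradientAt_apply (g : MvPolynomial σ ℤ_[p]) (x : σ → ℚ_[p]) (k : σ) :
    gradientAt g x k = aeval x (pderiv k g) := rfl

theorem gradientAt_C (r : ℤ_[p]) (x : σ → ℚ_[p]) : gradientAt (C r) x = 0 := by
  ext k; simp [gradientAt_apply]

theorem gradientAt_add (g h : MvPolynomial σ ℤ_[p]) (x : σ → ℚ_[p]) :
    gradientAt (g + h) x = gradientAt g x + gradientAt h x := by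
  ext k; simp [gradientAt_apply]

theorem gradientAt_mul_X_dotProduct [Fintype σ] (g : MvPolynomial σ ℤ_[p]) (k : σ)
    (x v : σ → ℚ_[p]) :
    gradientAt (g * X k) x ⬝ᵥ v = (gradientAt g x ⬝ᵥ v) * x k + aeval x g * v k := by
  classical
  simp [gradientAt_apply, dotProduct, pderiv_X, Pi.single_apply, add_mul, Finset.sum_add_distrib,
    Finset.sum_mul, apply_ite (aeval x), ite_mul]
  rw [add_comm]
  exact congrArg (· + _) (Finset.sum_congr rfl fun i _ => by ring)

variable [Fintype σ] {x y : σ → ℚ_[p]}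

theorem norm_coe_padicInt_le_one (x : σ → ℤ_[p]) : ‖fun i => (x i : ℚ_[p])‖ ≤ 1 :=
  (pi_norm_le_iff_of_nonneg zero_le_one).2 fun i => (x i).norm_le_one

theorem norm_aeval_le_one (g : MvPolynomial σ ℤ_[p]) (hx : ‖x‖ ≤ 1) : ‖aeval x g‖ ≤ 1 := by
  induction g using MvPolynomial.induction_on with
  | C r => simpa [← PadicInt.norm_def] using r.norm_le_one
  | add g h hg hh => simpa using (norm_add_le_max _ _).trans (max_le hg hh)
  | mul_X g k hg =>
    simpa using mul_le_one₀ hg (norm_nonneg _) ((norm_le_pi_norm x k).trans hx)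

theorem norm_gradientAt_apply_le_one (g : MvPolynomial σ ℤ_[p]) (hx : ‖x‖ ≤ 1) (k : σ) :
    ‖gradientAt g x k‖ ≤ 1 :=
  norm_aeval_le_one _ hx

theorem norm_aeval_sub_sub_le (g : MvPolynomial σ ℤ_[p]) (hx : ‖x‖ ≤ 1) (hy : ‖y‖ ≤ 1) :
    ‖aeval y g - aeval x g - gradientAt g x ⬝ᵥ (y - x)‖ ≤ ‖y - x‖ ^ 2 := by
  induction g using MvPolynomial.induction_on with
  | C r => simp [gradientAt_C]
  | add g h hg hh =>
    rw [gradientAt_add, add_dotProduct, map_add, map_add]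
    calc ‖_‖ = ‖(aeval y g - aeval x g - gradientAt g x ⬝ᵥ (y - x))
          + (aeval y h - aeval x h - gradientAt h x ⬝ᵥ (y - x))‖ := by congr 1; ring
      _ ≤ ‖y - x‖ ^ 2 := (norm_add_le_max _ _).trans (max_le hg hh)
  | mul_X g k hg =>
    rw [gradientAt_mul_X_dotProduct, map_mul, map_mul, aeval_X, aeval_X]
    calc ‖_‖ = ‖(gradientAt g x ⬝ᵥ (y - x)) * (y - x) k
          + (aeval y g - aeval x g - gradientAt g x ⬝ᵥ (y - x)) * y k‖ := by
          congr 1; simp only [Pi.sub_apply]; ring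
      _ ≤ ‖y - x‖ ^ 2 := by
        refine (norm_add_le_max _ _).trans (max_le ?_ ?_) <;> rw [norm_mul]
        · rw [sq]
          exact mul_le_mul (norm_dotProduct_le (norm_gradientAt_apply_le_one g hx) _)
            (norm_le_pi_norm _ k) (norm_nonneg _) (norm_nonneg _)
        · exact (mul_le_of_le_one_right (norm_nonneg _) ((norm_le_pi_norm y k).trans hy)).trans hg

theorem norm_aeval_sub_aeval_le (g : MvPolynomial σ ℤ_[p]) (hx : ‖x‖ ≤ 1) (hy : ‖y‖ ≤ 1) :
    ‖aeval y g - aeval x g‖ ≤ ‖y - x‖ := by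
  have h := norm_add_le_max (aeval y g - aeval x g - gradientAt g x ⬝ᵥ (y - x))
    (gradientAt g x ⬝ᵥ (y - x))
  rw [sub_add_cancel] at h
  refine h.trans (max_le ?_ (norm_dotProduct_le (norm_gradientAt_apply_le_one g hx) _))
  exact (norm_aeval_sub_sub_le g hx hy).trans
    (pow_le_of_le_one (norm_nonneg _) ((norm_sub_le_max y x).trans (max_le hy hx)) two_ne_zero)

end Polynomial

section Newton

variable {m : ℕ} (f : Fin m → MvPolynomial (Fin m) ℤ_[p]) {x y : Fin m → ℚ_[p]}

noncomputable def aevalVec (x : Fin m → ℚ_[p]) : Fin m → ℚ_[p] :=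
  fun i => aeval x (f i)

noncomputable def newtonStep (x : Fin m → ℚ_[p]) : Fin m → ℚ_[p] :=
  x - (jacobianQ f x)⁻¹ *ᵥ aevalVec f x

theorem norm_jacobianQ_apply_le_one (hx : ‖x‖ ≤ 1) (i k : Fin m) : ‖jacobianQ f x i k‖ ≤ 1 :=
  norm_aeval_le_one _ hx

theorem norm_aevalVec_sub_sub_le (hx : ‖x‖ ≤ 1) (hy : ‖y‖ ≤ 1) :
    ‖aevalVec f y - aevalVec f x - jacobianQ f x *ᵥ (y - x)‖ ≤ ‖y - x‖ ^ 2 :=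
  (pi_norm_le_iff_of_nonneg (sq_nonneg _)).2 fun i => norm_aeval_sub_sub_le (f i) hx hy

theorem det_jacobianQ_eq_aeval (x : Fin m → ℚ_[p]) :
    (jacobianQ f x).det = aeval x (Matrix.of fun i k => pderiv k (f i)).det := by
  rw [← AlgHom.coe_toRingHom, RingHom.map_det]
  rfl

theorem det_jacobianQ_coe (a : Fin m → ℤ_[p]) :
    (jacobianQ f fun i => (a i : ℚ_[p])).det = jacobianDet f a := by
  have : (jacobianQ f fun i => (a i : ℚ_[p])) =
      PadicInt.Coe.ringHom.mapMatrix (Matrix.of fun i k => eval a (pderiv k (f i))) := by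
    ext i k
    exact aeval_coe_padicInt _ _
  rw [this, ← RingHom.map_det]
  rfl

theorem norm_det_jacobianQ_sub_le (hx : ‖x‖ ≤ 1) (hy : ‖y‖ ≤ 1) :
    ‖(jacobianQ f y).det - (jacobianQ f x).det‖ ≤ ‖y - x‖ := by
  simpa only [det_jacobianQ_eq_aeval] using norm_aeval_sub_aeval_le _ hx hy

theorem newtonStep_sub_self (x : Fin m → ℚ_[p]) :
    newtonStep f x - x = -((jacobianQ f x)⁻¹ *ᵥ aevalVec f x) := by
  simp [newtonStep]

theorem norm_newtonStep_sub_self_le (hx : ‖x‖ ≤ 1) :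
    ‖newtonStep f x - x‖ ≤ ‖aevalVec f x‖ / ‖(jacobianQ f x).det‖ := by
  rw [newtonStep_sub_self, norm_neg]
  exact norm_inv_mulVec_le (norm_jacobianQ_apply_le_one f hx) _

theorem sub_newtonStep (hdet : (jacobianQ f x).det ≠ 0) (y : Fin m → ℚ_[p]) :
    y - newtonStep f x = (jacobianQ f x)⁻¹ *ᵥ (aevalVec f x + jacobianQ f x *ᵥ (y - x)) := by
  rw [mulVec_add, mulVec_mulVec, nonsing_inv_mul _ (isUnit_iff_ne_zero.2 hdet), one_mulVec,
    newtonStep]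
  abel

theorem norm_sub_newtonStep_le (hx : ‖x‖ ≤ 1) (hy : ‖y‖ ≤ 1) (hdet : (jacobianQ f x).det ≠ 0) :
    ‖y - newtonStep f x‖ ≤ max ‖aevalVec f y‖ (‖y - x‖ ^ 2) / ‖(jacobianQ f x).det‖ := by
  rw [sub_newtonStep f hdet]
  refine (norm_inv_mulVec_le (norm_jacobianQ_apply_le_one f hx) _).trans
    (div_le_div_of_nonneg_right ?_ (norm_nonneg _))
  rw [← sub_sub_cancel (aevalVec f y) (aevalVec f x + _), sub_add_eq_sub_sub]
  exact (norm_sub_le_max _ _).trans (max_le_max le_rfl (norm_aevalVec_sub_sub_le f hx hy))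

theorem norm_aevalVec_newtonStep_le (hx : ‖x‖ ≤ 1) (hx' : ‖newtonStep f x‖ ≤ 1)
    (hdet : (jacobianQ f x).det ≠ 0) :
    ‖aevalVec f (newtonStep f x)‖ ≤ ‖newtonStep f x - x‖ ^ 2 := by
  have hlin : jacobianQ f x *ᵥ (newtonStep f x - x) = -aevalVec f x := by
    rw [newtonStep_sub_self, mulVec_neg, mulVec_mulVec,
      mul_nonsing_inv _ (isUnit_iff_ne_zero.2 hdet), one_mulVec]
  simpa [hlin] using norm_aevalVec_sub_sub_le f hx hx'

structure HenselCondition (a : Fin m → ℚ_[p]) (δ t : ℝ) : Prop where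
  norm_le_one : ‖a‖ ≤ 1
  norm_det : ‖(jacobianQ f a).det‖ = δ
  pos : 0 < δ
  nonneg : 0 ≤ t
  lt_one : t < 1
  norm_aevalVec_le : ‖aevalVec f a‖ ≤ δ ^ 2 * t

namespace HenselCondition

variable {f} {a α : Fin m → ℚ_[p]} {δ t : ℝ}

theorem norm_sub_lt_norm_det (h : HenselCondition f a δ t) (hx : ‖x - a‖ ≤ δ * t) :
    ‖x - a‖ < ‖(jacobianQ f a).det‖ :=
  h.norm_det ▸ hx.trans_lt (mul_lt_of_lt_one_right h.pos h.lt_one)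

theorem norm_le_one_of_norm_sub_le (h : HenselCondition f a δ t) (hx : ‖x - a‖ ≤ δ * t) :
    ‖x‖ ≤ 1 :=
  norm_le_of_norm_sub_le h.norm_le_one <| (h.norm_sub_lt_norm_det hx).le.trans <|
    norm_det_le_one (norm_jacobianQ_apply_le_one f h.norm_le_one)

theorem norm_det_jacobianQ_eq (h : HenselCondition f a δ t) (hx : ‖x - a‖ ≤ δ * t) :
    ‖(jacobianQ f x).det‖ = δ :=
  (norm_eq_of_norm_sub_lt <|
    (norm_det_jacobianQ_sub_le f h.norm_le_one (h.norm_le_one_of_norm_sub_le hx)).trans_lt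
      (h.norm_sub_lt_norm_det hx)).trans h.norm_det

theorem det_jacobianQ_ne_zero (h : HenselCondition f a δ t) (hx : ‖x - a‖ ≤ δ * t) :
    (jacobianQ f x).det ≠ 0 :=
  norm_ne_zero_iff.1 ((h.norm_det_jacobianQ_eq hx).trans_ne h.pos.ne')

theorem newtonStep_estimates (h : HenselCondition f a δ t) {s : ℝ} (hs : s ≤ t)
    (hx : ‖x - a‖ ≤ δ * t) (hfx : ‖aevalVec f x‖ ≤ δ ^ 2 * s) :
    ‖newtonStep f x - a‖ ≤ δ * t ∧ ‖aevalVec f (newtonStep f x)‖ ≤ δ ^ 2 * s ^ 2 := by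
  have hx1 := h.norm_le_one_of_norm_sub_le hx
  have hstep : ‖newtonStep f x - x‖ ≤ δ * s :=
    calc ‖newtonStep f x - x‖ ≤ ‖aevalVec f x‖ / δ :=
          h.norm_det_jacobianQ_eq hx ▸ norm_newtonStep_sub_self_le f hx1
      _ ≤ δ ^ 2 * s / δ := div_le_div_of_nonneg_right hfx h.pos.le
      _ = δ * s := by field_simp [h.pos.ne']
  have hx' : ‖newtonStep f x - a‖ ≤ δ * t := by
    rw [← sub_add_sub_cancel _ x a]
    exact (norm_add_le_max _ _).trans
      (max_le (hstep.trans (mul_le_mul_of_nonneg_left hs h.pos.le)) hx)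
  refine ⟨hx', ?_⟩
  calc ‖aevalVec f (newtonStep f x)‖ ≤ ‖newtonStep f x - x‖ ^ 2 :=
        norm_aevalVec_newtonStep_le f hx1 (h.norm_le_one_of_norm_sub_le hx')
          (h.det_jacobianQ_ne_zero hx)
    _ ≤ (δ * s) ^ 2 := by gcongr
    _ = δ ^ 2 * s ^ 2 := mul_pow δ s 2

theorem iterate_estimates (h : HenselCondition f a δ t) (n : ℕ) :
    ‖(newtonStep f)^[n] a - a‖ ≤ δ * t ∧
      ‖aevalVec f ((newtonStep f)^[n] a)‖ ≤ δ ^ 2 * t ^ 2 ^ n := by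
  induction n with
  | zero => simpa using ⟨mul_nonneg h.pos.le h.nonneg, h.norm_aevalVec_le⟩
  | succ n ih =>
    rw [Function.iterate_succ_apply', pow_succ 2 n, pow_mul]
    exact h.newtonStep_estimates
      (pow_le_of_le_one h.nonneg h.lt_one.le (pow_ne_zero n two_ne_zero)) ih.1 ih.2

theorem norm_root_sub_le (h : HenselCondition f a δ t) (hα : aevalVec f α = 0)
    (hα1 : ‖α‖ ≤ 1) (hαa : ‖α - a‖ < δ) : ‖α - a‖ ≤ δ * t := by
  have ha : ‖a - a‖ ≤ δ * t := by simpa using mul_nonneg h.pos.le h.nonneg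
  have hstep := (h.newtonStep_estimates le_rfl ha h.norm_aevalVec_le).1
  have hroot : ‖α - newtonStep f a‖ ≤ ‖α - a‖ ^ 2 / δ := by
    simpa [hα, h.norm_det] using
      norm_sub_newtonStep_le f h.norm_le_one hα1 (h.det_jacobianQ_ne_zero ha)
  by_contra! hlt
  have hle : ‖α - a‖ ≤ ‖α - a‖ ^ 2 / δ := by
    have hmax := norm_add_le_max (α - newtonStep f a) (newtonStep f a - a)
    rw [sub_add_sub_cancel] at hmax
    rcases le_max_iff.1 hmax with hnear | hfar
    · exact hnear.trans hroot
    · exact absurd (hfar.trans hstep) hlt.not_ge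
  have hpos : 0 < ‖α - a‖ := (mul_nonneg h.pos.le h.nonneg).trans_lt hlt
  rw [le_div_iff₀ h.pos, sq] at hle
  exact hαa.not_ge (le_of_mul_le_mul_left hle hpos)

theorem norm_root_sub_iterate_le (h : HenselCondition f a δ t) (hα : aevalVec f α = 0)
    (hα1 : ‖α‖ ≤ 1) (hαa : ‖α - a‖ < δ) (n : ℕ) :
    ‖α - (newtonStep f)^[n] a‖ ≤ δ * t ^ 2 ^ n := by
  induction n with
  | zero => simpa using h.norm_root_sub_le hα hα1 hαa
  | succ n ih =>
    have hx := (h.iterate_estimates n).1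
    rw [Function.iterate_succ_apply']
    calc _ ≤ max ‖aevalVec f α‖ (‖α - (newtonStep f)^[n] a‖ ^ 2) / δ :=
          h.norm_det_jacobianQ_eq hx ▸ norm_sub_newtonStep_le f
            (h.norm_le_one_of_norm_sub_le hx) hα1 (h.det_jacobianQ_ne_zero hx)
      _ ≤ (δ * t ^ 2 ^ n) ^ 2 / δ := by
          rw [hα, norm_zero, max_eq_right (sq_nonneg _)]
          exact div_le_div_of_nonneg_right (pow_le_pow_left₀ (norm_nonneg _) ih 2) h.pos.le
      _ = δ * t ^ 2 ^ (n + 1) := by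
          rw [pow_succ 2 n, pow_mul]
          field_simp [h.pos.ne']

theorem tendsto_iterate (h : HenselCondition f a δ t) (hα : aevalVec f α = 0)
    (hα1 : ‖α‖ ≤ 1) (hαa : ‖α - a‖ < δ) :
    Tendsto (fun n => (newtonStep f)^[n] a) atTop (𝓝 α) := by
  refine tendsto_iff_norm_sub_tendsto_zero.2 <| squeeze_zero (fun _ => norm_nonneg _)
    (fun n => (norm_sub_rev _ _).trans_le (h.norm_root_sub_iterate_le hα hα1 hαa n)) ?_
  simpa using ((tendsto_pow_atTop_nhds_zero_of_lt_one h.nonneg h.lt_one).comp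
    (tendsto_pow_atTop_atTop_of_one_lt one_lt_two)).const_mul δ

end HenselCondition

theorem henselCondition_coe {a : Fin m → ℤ_[p]} {M : ℝ} (hM : ∀ k, ‖eval a (f k)‖ ≤ M)
    (hM0 : 0 ≤ M) (hMδ : M < ‖jacobianDet f a‖ ^ 2) :
    HenselCondition f (fun i => (a i : ℚ_[p])) ‖jacobianDet f a‖ (M / ‖jacobianDet f a‖ ^ 2) := by
  have hδ0 : 0 < ‖jacobianDet f a‖ :=
    norm_pos_iff.2 (norm_ne_zero_iff.1 (sq_pos_iff.1 (hM0.trans_lt hMδ)))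
  refine ⟨norm_coe_padicInt_le_one a, by rw [det_jacobianQ_coe]; rfl, hδ0, by positivity,
    (div_lt_one (by positivity)).2 hMδ, ?_⟩
  rw [mul_div_cancel₀ _ (by positivity)]
  refine (pi_norm_le_iff_of_nonneg hM0).2 fun k => ?_
  rw [aevalVec, aeval_coe_padicInt]
  exact hM k

end Newton

end PadicNewton

open PadicNewton

/-- **Newton iteration convergence for the multivariate Hensel's lemma.**
Let `f = (f_1, …, f_m) ∈ ℤ_p[x_1, …, x_m]^m` (`m ≥ 1`) and let `a ∈ ℤ_p^m` satisfy
`max_i ‖f_i(a)‖ < ‖det J_f(a)‖²` (i.e. `ord_p(f(a)) > 2·ord_p(det J_f(a))`). Let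
`(a_N)_{N ≥ 1}` be the Newton sequence, `a_1 = a` and `a_{N+1} = a_N − J_f(a_N)⁻¹ f(a_N)`.
Then (1) the sequence is well defined: each `a_N` lies in `ℤ_p^m` and
`‖det J_f(a_N)‖ = ‖det J_f(a)‖ ≠ 0`; and (2) if `α ∈ ℤ_p^m` is the unique root of `f` with
`‖α_i − a_i‖ < ‖det J_f(a)‖` for all `i`, then for every `N ≥ 1`,
`‖α_i − (a_N)_i‖ ≤ ‖det J_f(a)‖ · (max_k ‖f_k(a)‖ / ‖det J_f(a)‖²) ^ (2^(N−1))`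
(the norm form of `ord_p(α − a_N) ≥ ord_p(det J_f(a)) +
2^(N−1)·(ord_p(f(a)) − 2·ord_p(det J_f(a)))`); in particular `a_N → α`. -/
theorem newton_iteration_hensel (p : ℕ) [Fact p.Prime] (m : ℕ) (hm : 1 ≤ m)
    (f : Fin m → MvPolynomial (Fin m) ℤ_[p]) (a : Fin m → ℤ_[p])
    (ha : ∀ i, ‖MvPolynomial.eval a (f i)‖ < ‖jacobianDet f a‖ ^ 2)
    (seq : ℕ → Fin m → ℚ_[p])
    (hseq_one : seq 1 = fun i => (a i : ℚ_[p]))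
    (hseq_rec : ∀ N, 1 ≤ N → seq (N + 1) =
      seq N - (jacobianQ f (seq N))⁻¹.mulVec (fun i => MvPolynomial.aeval (seq N) (f i))) :
    (∀ N, 1 ≤ N → (∀ i, ‖seq N i‖ ≤ 1) ∧
        ‖(jacobianQ f (seq N)).det‖ = ‖jacobianDet f a‖ ∧ jacobianDet f a ≠ 0) ∧
      ∀ α : Fin m → ℤ_[p],
        (∀ i, MvPolynomial.eval α (f i) = 0) →
        (∀ i, ‖α i - a i‖ < ‖jacobianDet f a‖) →
        (∀ N, 1 ≤ N → ∀ i, ‖(α i : ℚ_[p]) - seq N i‖ ≤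
            ‖jacobianDet f a‖ *
              ((Finset.univ.sup' (Finset.univ_nonempty_iff.mpr ⟨⟨0, hm⟩⟩)
                  (fun k => ‖MvPolynomial.eval a (f k)‖)) / ‖jacobianDet f a‖ ^ 2)
                ^ 2 ^ (N - 1)) ∧
          Filter.Tendsto seq Filter.atTop (nhds fun i => (α i : ℚ_[p])) := by
  set δ := ‖jacobianDet f a‖
  set M := Finset.univ.sup' (Finset.univ_nonempty_iff.mpr ⟨⟨0, hm⟩⟩)
    (fun k => ‖MvPolynomial.eval a (f k)‖)
  have hle_M : ∀ k, ‖MvPolynomial.eval a (f k)‖ ≤ M := fun k =>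
    Finset.le_sup' (fun k => ‖MvPolynomial.eval a (f k)‖) (Finset.mem_univ k)
  have hstart : HenselCondition f (fun i => (a i : ℚ_[p])) δ (M / δ ^ 2) :=
    henselCondition_coe f hle_M ((norm_nonneg _).trans (hle_M ⟨0, hm⟩))
      ((Finset.sup'_lt_iff _).2 fun k _ => ha k)
  have hseq_succ := seq_succ_eq_iterate (g := newtonStep f) hseq_one hseq_rec
  have hseq (N : ℕ) (hN : 1 ≤ N) : seq N = (newtonStep f)^[N - 1] fun i => (a i : ℚ_[p]) := by
    rw [← hseq_succ, Nat.sub_add_cancel hN]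
  refine ⟨fun N hN => ?_, fun α hα hαa => ?_⟩
  · have hx := (hstart.iterate_estimates (N - 1)).1
    rw [hseq N hN]
    exact ⟨fun i => (norm_le_pi_norm _ i).trans (hstart.norm_le_one_of_norm_sub_le hx),
      hstart.norm_det_jacobianQ_eq hx, norm_pos_iff.1 hstart.pos⟩
  · have hroot : aevalVec f (fun i => (α i : ℚ_[p])) = 0 := funext fun i => by
      rw [aevalVec, aeval_coe_padicInt, hα i, PadicInt.coe_zero, Pi.zero_apply]
    have hαa' : ‖(fun i => (α i : ℚ_[p])) - fun i => (a i : ℚ_[p])‖ < δ :=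
      (pi_norm_lt_iff hstart.pos).2 hαa
    refine ⟨fun N hN i => ?_, ?_⟩
    · rw [hseq N hN]
      exact (norm_le_pi_norm _ i).trans <|
        hstart.norm_root_sub_iterate_le hroot (norm_coe_padicInt_le_one α) hαa' (N - 1)
    · rw [← Filter.tendsto_add_atTop_iff_nat 1, funext hseq_succ]
      exact hstart.tendsto_iterate hroot (norm_coe_padicInt_le_one α) hαa'
end
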